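/- arXiv:1007.4620 — 2 statements merged into one kernel-verified Lean document; each statement's English description precedes it below -/
import Mathlib

section
/- Let Γ be a finite connected simple graph with vertex set V and let 𝒯 be a maximal tubing of Γ. Counting the whole vertex set V as a tube, the assignment T ↦ v_T, sending each T ∈ 𝒯 ∪ {V} to the unique vertex v_T of T not contained in any element of 𝒯 properly contained in T, is a bijection from 𝒯 ∪ {V} onto V. -/
variable {V : Type*} [Fintype V] [DecidableEq V]

/-- A tube of a simple graph: a nonempty proper subset of vertices whose
induced subgraph is connected. -/
def IsTube (G : SimpleGraph V) (T : Finset V) : Prop :=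
  T.Nonempty ∧ T ≠ Finset.univ ∧ (G.induce (T : Set V)).Connected

/-- A tubing: a set of tubes, pairwise either properly nested or disjoint with
no edge between them. -/
def IsTubing (G : SimpleGraph V) (𝒯 : Finset (Finset V)) : Prop :=
  (∀ T ∈ 𝒯, IsTube G T) ∧
  ∀ T ∈ 𝒯, ∀ T' ∈ 𝒯, T ≠ T' →
    T ⊂ T' ∨ T' ⊂ T ∨
      ((∀ v ∈ T, v ∉ T') ∧ ∀ u ∈ T, ∀ v ∈ T', ¬ G.Adj u v)

/-- A maximal tubing: one not properly contained in any other tubing. -/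
def IsMaxTubing (G : SimpleGraph V) (𝒯 : Finset (Finset V)) : Prop :=
  IsTubing G 𝒯 ∧ ∀ 𝒯' : Finset (Finset V), IsTubing G 𝒯' → 𝒯 ⊆ 𝒯' → 𝒯' = 𝒯

/-!
If `v ≠ w` were two free vertices of `T`, the maximal connected subset of `T \ {w}` containing `v`
would be a tube compatible with every tube of `𝒯`: a tube properly inside `T` avoids `v` and `w`,
so it is either swallowed by that component or separated from it. Maximality of `𝒯` then puts
the component into `𝒯`, although it is properly contained in `T` and contains `v`.
Two members of `𝒯 ∪ {V}` with a common free vertex can be neither nested nor disjoint, and every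
vertex is free in the smallest member of `𝒯 ∪ {V}` containing it.
-/

open Finset

section

variable {α : Type*} {G : SimpleGraph α}

def Separated (G : SimpleGraph α) (A B : Finset α) : Prop :=
  (∀ v ∈ A, v ∉ B) ∧ ∀ u ∈ A, ∀ v ∈ B, ¬ G.Adj u v

def TubesCompatible (G : SimpleGraph α) (A B : Finset α) : Prop :=
  A ⊂ B ∨ B ⊂ A ∨ Separated G A B

lemma Separated.symm {A B : Finset α} (h : Separated G A B) : Separated G B A :=
  ⟨fun v hB hA => h.1 v hA hB, fun u hu v hv hadj => h.2 v hv u hu hadj.symm⟩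

lemma Separated.mono_left {A A' B : Finset α} (h : Separated G A B) (hA : A' ⊆ A) :
    Separated G A' B :=
  ⟨fun v hv => h.1 v (hA hv), fun u hu => h.2 u (hA hu)⟩

lemma TubesCompatible.symm {A B : Finset α} (h : TubesCompatible G A B) :
    TubesCompatible G B A := by
  rcases h with hAB | hBA | hsep
  · exact Or.inr (Or.inl hAB)
  · exact Or.inl hBA
  · exact Or.inr (Or.inr hsep.symm)

lemma subset_or_separated_of_maximal [DecidableEq α] {U C S : Finset α}
    (hC : Maximal (fun C : Finset α => C ⊆ U ∧ (G.induce (C : Set α)).Connected) C)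
    (hSU : S ⊆ U) (hS : (G.induce (S : Set α)).Connected) :
    S ⊆ C ∨ Separated G C S := by
  have subset_of_union : (G.induce ((C ∪ S : Finset α) : Set α)).Connected → S ⊆ C :=
    fun hCS => subset_union_right.trans (hC.2 ⟨union_subset hC.1.1 hSU, hCS⟩ subset_union_left)
  by_cases hmeet : ∃ x ∈ C, x ∈ S
  · obtain ⟨x, hxC, hxS⟩ := hmeet
    refine Or.inl (subset_of_union ?_)
    rw [coe_union]
    exact SimpleGraph.induce_union_connected hC.1.2.preconnected hS.preconnected ⟨x, hxC, hxS⟩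
  · push Not at hmeet
    refine Or.inr ⟨hmeet, fun x hxC y hyS hadj => hmeet y (subset_of_union ?_ hyS) hyS⟩
    rw [coe_union]
    exact SimpleGraph.connected_induce_union hC.1.2.preconnected hS.preconnected hxC hyS hadj

end

section

variable {G : SimpleGraph V}

def IsFreeVertex (𝒯 : Finset (Finset V)) (T : Finset V) (v : V) : Prop :=
  v ∈ T ∧ ∀ S ∈ 𝒯, S ⊂ T → v ∉ S

lemma IsTubing.compatible_of_mem_insert_univ {𝒯 : Finset (Finset V)} (h : IsTubing G 𝒯)
    {T₁ T₂ : Finset V} (hT₁ : T₁ ∈ insert univ 𝒯) (hT₂ : T₂ ∈ insert univ 𝒯) (hne : T₁ ≠ T₂) :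
    TubesCompatible G T₁ T₂ := by
  rcases mem_insert.1 hT₁ with rfl | hT₁ <;> rcases mem_insert.1 hT₂ with rfl | hT₂
  · exact absurd rfl hne
  · exact Or.inr (Or.inl (ssubset_univ_iff.2 (h.1 T₂ hT₂).2.1))
  · exact Or.inl (ssubset_univ_iff.2 (h.1 T₁ hT₁).2.1)
  · exact h.2 T₁ hT₁ T₂ hT₂ hne

lemma IsTubing.insert_tube {𝒯 : Finset (Finset V)} (h : IsTubing G 𝒯) {T : Finset V}
    (hT : IsTube G T) (hcompat : ∀ S ∈ 𝒯, TubesCompatible G T S) :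
    IsTubing G (insert T 𝒯) := by
  refine ⟨fun S hS => ?_, fun A hA B hB hAB => ?_⟩
  · rcases mem_insert.1 hS with rfl | hS
    exacts [hT, h.1 S hS]
  · rcases mem_insert.1 hA with rfl | hA' <;> rcases mem_insert.1 hB with rfl | hB'
    · exact absurd rfl hAB
    · exact hcompat B hB'
    · exact (hcompat A hA').symm
    · exact h.2 A hA' B hB' hAB

lemma IsMaxTubing.mem_of_compatible {𝒯 : Finset (Finset V)} (h : IsMaxTubing G 𝒯)
    {T : Finset V} (hT : IsTube G T) (hcompat : ∀ S ∈ 𝒯, TubesCompatible G T S) : T ∈ 𝒯 :=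
  h.2 _ (IsTubing.insert_tube h.1 hT hcompat) (subset_insert T 𝒯) ▸ mem_insert_self T 𝒯

lemma IsFreeVertex.notMem_of_ssubset {𝒯 : Finset (Finset V)} {T S : Finset V} {v : V}
    (hv : IsFreeVertex 𝒯 T v) (hS : S ∈ insert univ 𝒯) (hST : S ⊂ T) : v ∉ S :=
  hv.2 S ((mem_insert.1 hS).resolve_left (hST.trans_le (subset_univ T)).ne) hST

lemma IsTubing.eq_of_isFreeVertex {𝒯 : Finset (Finset V)} (h : IsTubing G 𝒯)
    {T₁ T₂ : Finset V} {v : V} (hT₁ : T₁ ∈ insert univ 𝒯) (hT₂ : T₂ ∈ insert univ 𝒯)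
    (hv₁ : IsFreeVertex 𝒯 T₁ v) (hv₂ : IsFreeVertex 𝒯 T₂ v) : T₁ = T₂ := by
  by_contra hne
  rcases h.compatible_of_mem_insert_univ hT₁ hT₂ hne with h₁₂ | h₂₁ | hsep
  · exact hv₂.notMem_of_ssubset hT₁ h₁₂ hv₁.1
  · exact hv₁.notMem_of_ssubset hT₂ h₂₁ hv₂.1
  · exact hsep.1 v hv₁.1 hv₂.1

lemma exists_isFreeVertex (𝒯 : Finset (Finset V)) (x : V) :
    ∃ T ∈ insert univ 𝒯, IsFreeVertex 𝒯 T x := by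
  obtain ⟨T, -, ⟨hT, hxT⟩, hmin⟩ :=
    Finite.exists_le_minimal (p := fun T => T ∈ insert univ 𝒯 ∧ x ∈ T)
      ⟨mem_insert_self univ 𝒯, mem_univ x⟩
  exact ⟨T, hT, hxT, fun S hS hST hxS =>
    hST.2 (hmin ⟨mem_insert_of_mem hS, hxS⟩ hST.1)⟩

lemma IsMaxTubing.eq_of_isFreeVertex {𝒯 : Finset (Finset V)} (h : IsMaxTubing G 𝒯)
    {T : Finset V} {v w : V} (hT : T ∈ insert univ 𝒯)
    (hv : IsFreeVertex 𝒯 T v) (hw : IsFreeVertex 𝒯 T w) : v = w := by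
  by_contra hvw
  obtain ⟨C, hvC, hC⟩ := Finite.exists_le_maximal
    (p := fun C : Finset V => C ⊆ T.erase w ∧ (G.induce (C : Set V)).Connected)
    (a := {v}) ⟨singleton_subset_iff.2 (mem_erase.2 ⟨hvw, hv.1⟩), by
      rw [coe_singleton]; exact (SimpleGraph.connected_iff _).2 ⟨.of_subsingleton, ⟨⟨v, rfl⟩⟩⟩⟩
  have hvC : v ∈ C := singleton_subset_iff.1 hvC
  have hwC : w ∉ C := fun hwC => (mem_erase.1 (hC.1.1 hwC)).1 rfl
  have hCT : C ⊂ T := ⟨hC.1.1.trans (erase_subset w T), fun hTC => hwC (hTC hw.1)⟩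
  have hCtube : IsTube G C := ⟨⟨v, hvC⟩, fun hCu => hwC (hCu ▸ mem_univ w), hC.1.2⟩
  refine hv.2 C (h.mem_of_compatible hCtube fun S hS => ?_) hCT hvC
  by_cases hTS : T = S
  · exact Or.inl (hTS ▸ hCT)
  rcases IsTubing.compatible_of_mem_insert_univ h.1 hT (mem_insert_of_mem hS) hTS
    with hTsS | hSsT | hsep
  · exact Or.inl (hCT.trans hTsS)
  · have hSU : S ⊆ T.erase w := fun x hx =>
      mem_erase.2 ⟨fun hxw => hw.2 S hS hSsT (hxw ▸ hx), hSsT.1 hx⟩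
    rcases subset_or_separated_of_maximal hC hSU (h.1.1 S hS).2.2 with hSC | hsep
    · exact Or.inr (Or.inl ⟨hSC, fun hCS => hv.2 S hS hSsT (hCS hvC)⟩)
    · exact Or.inr (Or.inr hsep)
  · exact Or.inr (Or.inr (hsep.mono_left hCT.1))

end

theorem maximal_tubing_tube_vertex_bijection_general
    (G : SimpleGraph V)
    (𝒯 : Finset (Finset V)) (h : IsMaxTubing G 𝒯) :
    ∀ f : Finset V → V,
      (∀ T ∈ insert Finset.univ 𝒯, f T ∈ T ∧ ∀ S ∈ 𝒯, S ⊂ T → f T ∉ S) →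
      Set.BijOn f (↑(insert Finset.univ 𝒯) : Set (Finset V)) Set.univ := by
  intro f hf
  refine ⟨fun _ _ => Set.mem_univ _, fun T₁ hT₁ T₂ hT₂ hf₁₂ => ?_, fun x _ => ?_⟩
  · exact IsTubing.eq_of_isFreeVertex h.1 hT₁ hT₂ (hf T₁ hT₁) (hf₁₂ ▸ hf T₂ hT₂)
  · obtain ⟨T, hT, hx⟩ := exists_isFreeVertex 𝒯 x
    exact ⟨T, hT, h.eq_of_isFreeVertex hT (hf T hT) hx⟩

theorem maximal_tubing_tube_vertex_bijection
    (G : SimpleGraph V) (hG : G.Connected)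
    (𝒯 : Finset (Finset V)) (h : IsMaxTubing G 𝒯) :
    ∀ f : Finset V → V,
      (∀ T ∈ insert Finset.univ 𝒯, f T ∈ T ∧ ∀ S ∈ 𝒯, S ⊂ T → f T ∉ S) →
      Set.BijOn f (↑(insert Finset.univ 𝒯) : Set (Finset V)) Set.univ :=
  maximal_tubing_tube_vertex_bijection_general G 𝒯 h
end

section
/- Every maximal tubing of a finite connected simple graph with m vertices consists of exactly m − 1 tubes. -/
variable {V : Type*} [Fintype V] [DecidableEq V]

/-!
Put `𝒮 = 𝒯 ∪ {V}` and call a vertex of `T ∈ 𝒮` uncovered in `T` if it lies in no tube of `𝒯`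
strictly inside `T`. Every vertex is uncovered in exactly one member of `𝒮`, the smallest one
containing it, so the uncovered sets partition `V`. Each of them is nonempty: otherwise the
maximal tubes inside the connected set `T` would cover it, and an edge leaving one of them would
contradict compatibility. By maximality of `𝒯` each has at most one element: if `u ≠ u'` were
both uncovered in `T`, the connected component of `u` in `T - u'` would be a tube compatible with
every tube of `𝒯` but not in `𝒯`. Hence `|V| = |𝒮| = |𝒯| + 1`.
-/

namespace SimpleGraph

variable {W : Type*} {G : SimpleGraph W}

lemma exists_adj_mem_notMem_of_induce_connected {T R : Set W} (hT : (G.induce T).Connected)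
    {x y : W} (hxT : x ∈ T) (hyT : y ∈ T) (hxR : x ∈ R) (hyR : y ∉ R) :
    ∃ a ∈ T, ∃ b ∈ T, G.Adj a b ∧ a ∈ R ∧ b ∉ R := by
  obtain ⟨p⟩ := hT.preconnected ⟨x, hxT⟩ ⟨y, hyT⟩
  obtain ⟨d, -, hd, hd'⟩ := p.exists_boundary_dart {z | z.1 ∈ R} hxR hyR
  exact ⟨d.fst, d.fst.2, d.snd, d.snd.2, d.adj, hd, hd'⟩

lemma subset_or_separated_of_maximal_connected [DecidableEq W] {U S R : Finset W}
    (hS : Maximal (fun S : Finset W => S ⊆ U ∧ (G.induce (S : Set W)).Connected) S)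
    (hRU : R ⊆ U) (hR : (G.induce (R : Set W)).Connected) :
    R ⊆ S ∨ (∀ v ∈ S, v ∉ R) ∧ ∀ a ∈ S, ∀ b ∈ R, ¬ G.Adj a b := by
  have absorb : (G.induce ((S ∪ R : Finset W) : Set W)).Connected → R ⊆ S := fun hSR =>
    Finset.subset_union_right.trans
      (hS.le_of_ge ⟨Finset.union_subset hS.prop.1 hRU, hSR⟩ Finset.subset_union_left)
  by_cases hSR : ∀ v ∈ S, v ∉ R
  · refine .inr ⟨hSR, fun a ha b hb hab => ?_⟩
    obtain ⟨⟨c, hc⟩⟩ := hR.nonempty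
    have hRS := absorb (by
      rw [Finset.coe_union]
      exact connected_induce_union hS.prop.2.preconnected hR.preconnected ha hb hab)
    exact hSR c (hRS hc) hc
  · obtain ⟨v, hvS, hvR⟩ : ∃ v ∈ S, v ∈ R := by simpa using hSR
    refine .inl (absorb ?_)
    rw [Finset.coe_union]
    exact induce_union_connected hS.prop.2.preconnected hR.preconnected ⟨v, hvS, hvR⟩

end SimpleGraph

open Finset

section Tubing

variable {W : Type*} {G : SimpleGraph W} {𝒯 : Finset (Finset W)} {S T T' R : Finset W}

def TubeCompatible (G : SimpleGraph W) (T T' : Finset W) : Prop :=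
  T ⊂ T' ∨ T' ⊂ T ∨ ((∀ v ∈ T, v ∉ T') ∧ ∀ u ∈ T, ∀ v ∈ T', ¬ G.Adj u v)

lemma TubeCompatible.symm (h : TubeCompatible G T T') : TubeCompatible G T' T := by
  rcases h with h | h | ⟨hd, hn⟩
  · exact .inr (.inl h)
  · exact .inl h
  · exact .inr (.inr ⟨fun v hv hv' => hd v hv' hv, fun u hu v hv huv => hn v hv u hu huv.symm⟩)

lemma TubeCompatible.of_ssubset (hST : S ⊂ T) (h : TubeCompatible G T R) (hRT : ¬ R ⊂ T) :
    TubeCompatible G S R := by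
  rcases h with h | h | ⟨hd, hn⟩
  · exact .inl (hST.trans h)
  · exact absurd h hRT
  · exact .inr (.inr ⟨fun v hv => hd v (hST.subset hv), fun u hu => hn u (hST.subset hu)⟩)

section Fintype

variable [Fintype W]

lemma IsTubing.tubeCompatible (h : IsTubing G 𝒯) (hT : T ∈ 𝒯) (hT' : T' ∈ 𝒯) (hne : T ≠ T') :
    TubeCompatible G T T' :=
  h.2 T hT T' hT' hne

lemma IsTubing.ssubset_univ (h : IsTubing G 𝒯) (hT : T ∈ 𝒯) : T ⊂ univ :=
  ssubset_univ_iff.2 (h.1 T hT).2.1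

end Fintype

variable [DecidableEq W]

def uncovered (𝒯 : Finset (Finset W)) (T : Finset W) : Finset W :=
  T.filter fun v => ∀ R ∈ 𝒯, R ⊂ T → v ∉ R

@[simp]
lemma mem_uncovered {v : W} : v ∈ uncovered 𝒯 T ↔ v ∈ T ∧ ∀ R ∈ 𝒯, R ⊂ T → v ∉ R :=
  mem_filter

variable [Fintype W]

lemma IsTubing.tubeCompatible_of_mem_insert_univ (h : IsTubing G 𝒯) (hT : T ∈ insert univ 𝒯)
    (hT' : T' ∈ insert univ 𝒯) (hne : T ≠ T') : TubeCompatible G T T' := by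
  rcases mem_insert.1 hT with rfl | hT <;> rcases mem_insert.1 hT' with rfl | hT'
  · exact absurd rfl hne
  · exact .inr (.inl (h.ssubset_univ hT'))
  · exact .inl (h.ssubset_univ hT)
  · exact h.tubeCompatible hT hT' hne

lemma IsTubing.insert_tube_s3 (h : IsTubing G 𝒯) (hS : IsTube G S)
    (hc : ∀ R ∈ 𝒯, R ≠ S → TubeCompatible G S R) : IsTubing G (insert S 𝒯) := by
  refine ⟨fun R hR => ?_, fun T₁ hT₁ T₂ hT₂ hne => ?_⟩
  · rcases mem_insert.1 hR with rfl | hR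
    exacts [hS, h.1 R hR]
  · rcases mem_insert.1 hT₁ with h₁ | h₁ <;> rcases mem_insert.1 hT₂ with h₂ | h₂
    · exact absurd (h₁.trans h₂.symm) hne
    · exact h₁ ▸ hc T₂ h₂ (h₁ ▸ hne.symm)
    · exact h₂ ▸ (hc T₁ h₁ (h₂ ▸ hne)).symm
    · exact h.tubeCompatible h₁ h₂ hne

lemma IsMaxTubing.mem_of_tubeCompatible (h : IsMaxTubing G 𝒯) (hS : IsTube G S)
    (hc : ∀ R ∈ 𝒯, R ≠ S → TubeCompatible G S R) : S ∈ 𝒯 :=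
  h.2 _ (h.1.insert_tube_s3 hS hc) (subset_insert S 𝒯) ▸ mem_insert_self S 𝒯

lemma exists_mem_uncovered (𝒯 : Finset (Finset W)) (v : W) :
    ∃ T ∈ insert univ 𝒯, v ∈ uncovered 𝒯 T := by
  obtain ⟨T, hT⟩ := ((insert univ 𝒯).filter (v ∈ ·)).exists_minimal
    ⟨univ, mem_filter.2 ⟨mem_insert_self _ _, mem_univ v⟩⟩
  obtain ⟨hT𝒮, hvT⟩ := mem_filter.1 hT.prop
  exact ⟨T, hT𝒮, mem_uncovered.2 ⟨hvT, fun R hR hRT hvR =>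
    hT.not_prop_of_lt hRT (mem_filter.2 ⟨mem_insert_of_mem hR, hvR⟩)⟩⟩

lemma IsTubing.disjoint_uncovered (h : IsTubing G 𝒯) (hT : T ∈ insert univ 𝒯)
    (hT' : T' ∈ insert univ 𝒯) (hne : T ≠ T') :
    Disjoint (uncovered 𝒯 T) (uncovered 𝒯 T') := by
  have mem_of_ssubset {T₁ T₂ : Finset W} (h₁ : T₁ ∈ insert univ 𝒯) (h₁₂ : T₁ ⊂ T₂) : T₁ ∈ 𝒯 :=
    (mem_insert.1 h₁).resolve_left (ssubset_univ_iff.1 (h₁₂.trans_subset (subset_univ T₂)))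
  refine disjoint_left.2 fun v hv hv' => ?_
  rw [mem_uncovered] at hv hv'
  rcases h.tubeCompatible_of_mem_insert_univ hT hT' hne with hss | hss | ⟨hd, -⟩
  · exact hv'.2 T (mem_of_ssubset hT hss) hss hv.1
  · exact hv.2 T' (mem_of_ssubset hT' hss) hss hv'.1
  · exact hd v hv.1 hv'.1

lemma IsTubing.uncovered_nonempty (h : IsTubing G 𝒯) (hT : T.Nonempty)
    (hTc : (G.induce (T : Set W)).Connected) : (uncovered 𝒯 T).Nonempty := by
  by_contra hempty
  have hcov : ∀ v ∈ T, ∃ R ∈ 𝒯, R ⊂ T ∧ v ∈ R := by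
    intro v hv
    by_contra! hv'
    exact hempty ⟨v, mem_uncovered.2 ⟨hv, hv'⟩⟩
  obtain ⟨v, hv⟩ := hT
  obtain ⟨R₀, hR₀, hR₀T, -⟩ := hcov v hv
  obtain ⟨R, -, hR⟩ := Finite.exists_le_maximal (p := fun R => R ∈ 𝒯 ∧ R ⊂ T) ⟨hR₀, hR₀T⟩
  obtain ⟨hR𝒯, hRT⟩ := hR.prop
  obtain ⟨x, hx⟩ := (h.1 R hR𝒯).1
  obtain ⟨y, hyT, hyR⟩ := exists_of_ssubset hRT
  obtain ⟨a, -, b, hbT, hab, haR, hbR⟩ := G.exists_adj_mem_notMem_of_induce_connected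
    (R := (R : Set W)) hTc (hRT.subset hx) hyT hx hyR
  obtain ⟨R', hR'𝒯, hR'T, hbR'⟩ := hcov b hbT
  rcases h.tubeCompatible hR𝒯 hR'𝒯 (by rintro rfl; exact hbR hbR') with hss | hss | ⟨-, hn⟩
  · exact hR.not_prop_of_gt hss ⟨hR'𝒯, hR'T⟩
  · exact hbR (hss.subset hbR')
  · exact hn a haR b hbR' hab

lemma IsMaxTubing.card_uncovered_le_one (h : IsMaxTubing G 𝒯) (hT : T ∈ insert univ 𝒯) :
    (uncovered 𝒯 T).card ≤ 1 := by
  refine card_le_one.2 fun u hu u' hu' => by_contra fun hne => ?_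
  rw [mem_uncovered] at hu hu'
  obtain ⟨S, hSu, hS⟩ := Finite.exists_le_maximal
    (p := fun S : Finset W => S ⊆ T.erase u' ∧ (G.induce (S : Set W)).Connected) (a := {u})
    ⟨singleton_subset_iff.2 (mem_erase.2 ⟨hne, hu.1⟩), by rw [coe_singleton]; simp⟩
  have huS : u ∈ S := hSu (mem_singleton_self u)
  have hST : S ⊂ T := hS.prop.1.trans_ssubset (erase_ssubset hu'.1)
  have hSnot : S ∉ 𝒯 := fun hS𝒯 => hu.2 S hS𝒯 hST huS
  refine hSnot (h.mem_of_tubeCompatible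
    ⟨⟨u, huS⟩, ssubset_univ_iff.1 (hST.trans_subset (subset_univ T)), hS.prop.2⟩ fun R hR hRS => ?_)
  by_cases hRT : R ⊂ T
  · have hRU : R ⊆ T.erase u' := fun v hv =>
      mem_erase.2 ⟨fun hvu => hu'.2 R hR hRT (hvu ▸ hv), hRT.subset hv⟩
    rcases G.subset_or_separated_of_maximal_connected hS hRU (h.1.1 R hR).2.2 with hsub | hsep
    · exact .inr (.inl (hsub.ssubset_of_ne hRS))
    · exact .inr (.inr hsep)
  · rcases eq_or_ne R T with rfl | hRT'
    · exact .inl hST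
    · exact (h.1.tubeCompatible_of_mem_insert_univ hT (mem_insert_of_mem hR) hRT'.symm).of_ssubset
        hST hRT

end Tubing

theorem maximal_tubing_card
    (G : SimpleGraph V) (hG : G.Connected)
    (𝒯 : Finset (Finset V)) (h : IsMaxTubing G 𝒯) :
    𝒯.card = Fintype.card V - 1 := by
  have hone : ∀ T ∈ insert univ 𝒯, (uncovered 𝒯 T).card = 1 := by
    intro T hT
    refine (h.card_uncovered_le_one hT).antisymm (card_pos.2 ?_)
    rcases mem_insert.1 hT with rfl | hT
    · exact h.1.uncovered_nonempty (univ_nonempty_iff.2 hG.nonempty)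
        (by rw [coe_univ]; exact (G.induceUnivIso).connected_iff.2 hG)
    · exact h.1.uncovered_nonempty (h.1.1 T hT).1 (h.1.1 T hT).2.2
  have hcover : (insert univ 𝒯).biUnion (uncovered 𝒯) = univ :=
    eq_univ_of_forall fun v => mem_biUnion.2 (exists_mem_uncovered 𝒯 v)
  have hcard : Fintype.card V = 𝒯.card + 1 := calc
    Fintype.card V = ((insert univ 𝒯).biUnion (uncovered 𝒯)).card := by rw [hcover, card_univ]
    _ = ∑ T ∈ insert univ 𝒯, (uncovered 𝒯 T).card :=
      card_biUnion fun T hT T' hT' hne => h.1.disjoint_uncovered hT hT' hne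
    _ = (insert univ 𝒯).card := by rw [sum_congr rfl hone, card_eq_sum_ones]
    _ = 𝒯.card + 1 := card_insert_of_notMem fun hU => (h.1.1 _ hU).2.1 rfl
  omega
end
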